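/- Let Σ be a finite alphabet, let L ⊆ Σ* be a nonempty regular language, and let n = |{w⁻¹L : w ∈ Σ*}| be the number of distinct left quotients of L, with n > 2. Then the number of distinct unions of left quotients of L equals 2^n and the number of distinct intersections of left quotients of L equals 2^n if and only if for every w ∈ Σ* both of the following sets are nonempty: w⁻¹L \ ⋃ {u⁻¹L : u ∈ Σ*, u⁻¹L ≠ w⁻¹L} and (⋂ {u⁻¹L : u ∈ Σ*, u⁻¹L ≠ w⁻¹L}) \ w⁻¹L, where an intersection over an empty index family is Σ*. -/

import Mathlib

open Set

/-- The left quotient `w⁻¹L = {x : wx ∈ L}`. -/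
def leftQuot {α : Type*} (L : Set (List α)) (w : List α) : Set (List α) :=
  {x | w ++ x ∈ L}

/-- The right quotient `Lv⁻¹ = {u : uv ∈ L}`. -/
def rightQuot {α : Type*} (L : Set (List α)) (v : List α) : Set (List α) :=
  {u | u ++ v ∈ L}

/-- The left atom of `L` at `v`: the class of `v` under the left congruence of `L`. -/
def leftAtom {α : Type*} (L : Set (List α)) (v : List α) : Set (List α) :=
  {x | ∀ u : List α, u ++ x ∈ L ↔ u ++ v ∈ L}

/-- The right atom of `L` at `w`: the Nerode class of `w`. -/
def rightAtom {α : Type*} (L : Set (List α)) (w : List α) : Set (List α) :=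
  {u | ∀ x : List α, u ++ x ∈ L ↔ w ++ x ∈ L}

/-- `X` is a union of left quotients of `L`. -/
def IsUnionLeftQuot {α : Type*} (L : Set (List α)) (X : Set (List α)) : Prop :=
  ∃ W : Set (List α), X = ⋃ w ∈ W, leftQuot L w

/-- `Y` is a union of right quotients of `L`. -/
def IsUnionRightQuot {α : Type*} (L : Set (List α)) (Y : Set (List α)) : Prop :=
  ∃ W : Set (List α), Y = ⋃ v ∈ W, rightQuot L v

/-- `X` is an intersection of left quotients of `L` (empty intersection is `Σ*`). -/
def IsInterLeftQuot {α : Type*} (L : Set (List α)) (X : Set (List α)) : Prop :=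
  ∃ W : Set (List α), X = ⋂ w ∈ W, leftQuot L w

/-- `Y` is an intersection of right quotients of `L` (empty intersection is `Σ*`). -/
def IsInterRightQuot {α : Type*} (L : Set (List α)) (Y : Set (List α)) : Prop :=
  ∃ W : Set (List α), Y = ⋂ v ∈ W, rightQuot L v

/-- The map `Ψ(X) = ⋃ {Lv⁻¹ : v ∉ X}`. -/
def Psi {α : Type*} (L : Set (List α)) (X : Set (List α)) : Set (List α) :=
  ⋃ v ∈ {v : List α | v ∉ X}, rightQuot L v

/-- The map `Ψ'(Y) = ⋃ {u⁻¹L : u ∉ Y}`. -/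
def Psi' {α : Type*} (L : Set (List α)) (Y : Set (List α)) : Set (List α) :=
  ⋃ u ∈ {u : List α | u ∉ Y}, leftQuot L u

/-- The map `Φ(X) = ⋂ {Lv⁻¹ : v ∈ X}` (empty intersection is `Σ*`). -/
def Phi {α : Type*} (L : Set (List α)) (X : Set (List α)) : Set (List α) :=
  ⋂ v ∈ X, rightQuot L v

/-- The map `Φ'(Y) = ⋂ {u⁻¹L : u ∈ Y}` (empty intersection is `Σ*`). -/
def Phi' {α : Type*} (L : Set (List α)) (Y : Set (List α)) : Set (List α) :=
  ⋂ u ∈ Y, leftQuot L u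

/-! The unions of left quotients of `L` are the images under `⋃₀` of the subsets of the finite
set `Q` of left quotients, so there are `2 ^ |Q|` of them iff `⋃₀` is injective on `𝒫 Q`. In any
complete lattice `sSup` is injective on `𝒫 Q` iff no `q ∈ Q` lies below `sSup (Q \ {q})`; for sets
this says that `q \ ⋃₀ (Q \ {q})` is nonempty. Intersections are the order dual. -/

section CompleteLattice

variable {γ : Type*} [CompleteLattice γ] {Q : Set γ}

theorem injOn_sSup_powerset_iff :
    InjOn sSup (𝒫 Q) ↔ ∀ q ∈ Q, ¬ q ≤ sSup (Q \ {q}) := by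
  constructor
  · intro hinj q hq hle
    have hsup : sSup Q = sSup (Q \ {q}) := by
      refine le_antisymm (sSup_le fun t ht => ?_) (sSup_le_sSup sdiff_subset)
      by_cases htq : t = q
      · exact htq ▸ hle
      · exact le_sSup ⟨ht, htq⟩
    exact (hinj (mem_powerset subset_rfl) (mem_powerset sdiff_subset) hsup ▸ hq).2 rfl
  · intro hirr
    have hsub : ∀ S ⊆ Q, ∀ T ⊆ Q, sSup S = sSup T → S ⊆ T := by
      intro S hS T hT hST q hqS
      by_contra hqT
      refine hirr q (hS hqS) ((le_sSup hqS).trans (hST ▸ sSup_le_sSup ?_))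
      exact fun t ht => ⟨hT ht, fun h => hqT (h ▸ ht)⟩
    exact fun S hS T hT hST => (hsub S hS T hT hST).antisymm (hsub T hT S hS hST.symm)

theorem injOn_sInf_powerset_iff :
    InjOn sInf (𝒫 Q) ↔ ∀ q ∈ Q, ¬ sInf (Q \ {q}) ≤ q :=
  injOn_sSup_powerset_iff (γ := γᵒᵈ)

end CompleteLattice

namespace Set

variable {β ι : Type*}

theorem injOn_sUnion_powerset_iff {Q : Set (Set β)} :
    InjOn sUnion (𝒫 Q) ↔ ∀ q ∈ Q, (q \ ⋃₀ (Q \ {q})).Nonempty := by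
  simp only [sdiff_nonempty]
  exact injOn_sSup_powerset_iff

theorem injOn_sInter_powerset_iff {Q : Set (Set β)} :
    InjOn sInter (𝒫 Q) ↔ ∀ q ∈ Q, (⋂₀ (Q \ {q}) \ q).Nonempty := by
  simp only [sdiff_nonempty]
  exact injOn_sInf_powerset_iff

theorem Finite.ncard_image_powerset_eq_iff {γ : Type*} {Q : Set β} (hQ : Q.Finite)
    (f : Set β → γ) : (f '' 𝒫 Q).ncard = 2 ^ Q.ncard ↔ InjOn f (𝒫 Q) := by
  rw [← ncard_powerset Q hQ, ncard_image_iff hQ.powerset]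

theorem setOf_eq_biUnion_eq_image_powerset (f : ι → Set β) :
    {X | ∃ W : Set ι, X = ⋃ i ∈ W, f i} = sUnion '' 𝒫 (range f) := by
  ext X
  simp only [mem_ofPred_eq, mem_image, mem_powerset_iff, subset_range_iff_exists_image_eq]
  constructor
  · rintro ⟨W, rfl⟩
    exact ⟨f '' W, ⟨W, rfl⟩, sUnion_image f W⟩
  · rintro ⟨_, ⟨W, rfl⟩, rfl⟩
    exact ⟨W, sUnion_image f W⟩

theorem setOf_eq_biInter_eq_image_powerset (f : ι → Set β) :
    {X | ∃ W : Set ι, X = ⋂ i ∈ W, f i} = sInter '' 𝒫 (range f) := by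
  ext X
  simp only [mem_ofPred_eq, mem_image, mem_powerset_iff, subset_range_iff_exists_image_eq]
  constructor
  · rintro ⟨W, rfl⟩
    exact ⟨f '' W, ⟨W, rfl⟩, sInter_image f W⟩
  · rintro ⟨_, ⟨W, rfl⟩, rfl⟩
    exact ⟨W, sInter_image f W⟩

theorem range_sdiff_singleton_apply (f : ι → β) (i : ι) :
    range f \ {f i} = f '' {j | f j ≠ f i} := by
  ext x
  simp only [mem_sdiff, mem_range, mem_singleton_iff, mem_image, mem_ofPred_eq]
  grind

end Set

theorem union_inter_complexity_general {α : Type*} (L : Set (List α))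
    (hL : Language.IsRegular L) (n : ℕ)
    (hn : n = {X : Set (List α) | ∃ w : List α, X = leftQuot L w}.ncard) :
    ({X : Set (List α) | IsUnionLeftQuot L X}.ncard = 2 ^ n ∧
      {X : Set (List α) | IsInterLeftQuot L X}.ncard = 2 ^ n) ↔
      ∀ w : List α,
        (leftQuot L w \
          ⋃ u ∈ {u : List α | leftQuot L u ≠ leftQuot L w}, leftQuot L u).Nonempty ∧
        ((⋂ u ∈ {u : List α | leftQuot L u ≠ leftQuot L w}, leftQuot L u) \
          leftQuot L w).Nonempty := by
  have hQ : {X : Set (List α) | ∃ w : List α, X = leftQuot L w} = range (leftQuot L) := by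
    simp only [range, eq_comm]
  have hfin : (range (leftQuot L)).Finite := Language.IsRegular.finite_range_leftQuotient hL
  simp only [IsUnionLeftQuot, IsInterLeftQuot, setOf_eq_biUnion_eq_image_powerset,
    setOf_eq_biInter_eq_image_powerset, hn, hQ, hfin.ncard_image_powerset_eq_iff,
    injOn_sUnion_powerset_iff, injOn_sInter_powerset_iff, ← forall_and, forall_mem_range,
    range_sdiff_singleton_apply, sUnion_image, sInter_image]

/-- for `n > 2`, maximal complexity of both lattices is equivalent
to nonemptiness of the `2n` atomic intersections. -/
theorem union_inter_complexity {α : Type*} [Fintype α] (L : Set (List α))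
    (hne : L.Nonempty) (hL : Language.IsRegular L) (n : ℕ)
    (hn : n = {X : Set (List α) | ∃ w : List α, X = leftQuot L w}.ncard)
    (hn2 : 2 < n) :
    ({X : Set (List α) | IsUnionLeftQuot L X}.ncard = 2 ^ n ∧
      {X : Set (List α) | IsInterLeftQuot L X}.ncard = 2 ^ n) ↔
      ∀ w : List α,
        (leftQuot L w \
          ⋃ u ∈ {u : List α | leftQuot L u ≠ leftQuot L w}, leftQuot L u).Nonempty ∧
        ((⋂ u ∈ {u : List α | leftQuot L u ≠ leftQuot L w}, leftQuot L u) \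
          leftQuot L w).Nonempty :=
  union_inter_complexity_general L hL n hn
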